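/- arXiv:2111.11701 — 7 statements merged into one kernel-verified Lean document; each statement's English description precedes it below -/
import Mathlib

section
/- For every γ ∈ (0,1), every T > 0 and every t ∈ (0,T], one has ∫_t^T s⁻¹·(ln(1+1/s))^(γ−1) ds ≤ ((1+T)/γ)·(ln(1+1/t))^γ. -/
/-!
With `θ s = log (1 + 1/s)` one has `θ' s = -1 / (s (s + 1))`, so
`s⁻¹ θ^(γ-1) = (s + 1) θ^(γ-1) / (s (s + 1)) ≤ (1 + T) θ^(γ-1) / (s (s + 1))` on `(t, T]`,
and the right-hand side is the derivative of `-((1 + T) / γ) θ^γ`. Integrating gives the bound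
`((1 + T) / γ) (θ t ^ γ - θ T ^ γ) ≤ ((1 + T) / γ) θ t ^ γ`.
-/

open Real Set MeasureTheory

lemma log_one_add_one_div_pos {s : ℝ} (hs : 0 < s) : 0 < log (1 + 1 / s) :=
  log_pos (by linarith [one_div_pos.mpr hs])

lemma hasDerivAt_log_one_add_one_div {s : ℝ} (hs : 0 < s) :
    HasDerivAt (fun u => log (1 + 1 / u)) (-(s * (s + 1))⁻¹) s := by
  have hinv : HasDerivAt (fun u : ℝ => 1 + 1 / u) (-(s ^ 2)⁻¹) s := by
    simpa only [one_div] using (hasDerivAt_inv hs.ne').const_add 1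
  convert hinv.log (by positivity) using 1
  field_simp

lemma hasDerivAt_log_one_add_one_div_rpow (p : ℝ) {s : ℝ} (hs : 0 < s) :
    HasDerivAt (fun u => log (1 + 1 / u) ^ p)
      (-(p * log (1 + 1 / s) ^ (p - 1) / (s * (s + 1)))) s := by
  convert (hasDerivAt_log_one_add_one_div hs).rpow_const
    (Or.inl (log_one_add_one_div_pos hs).ne') using 1
  ring

lemma continuousOn_log_one_add_one_div_rpow (p : ℝ) :
    ContinuousOn (fun s => log (1 + 1 / s) ^ p) (Ioi 0) := fun _ hs =>
  (hasDerivAt_log_one_add_one_div_rpow p hs).continuousAt.continuousWithinAt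

lemma inv_le_div_mul_add_one {s T : ℝ} (hs : 0 < s) (hsT : s ≤ T) :
    s⁻¹ ≤ (1 + T) / (s * (s + 1)) := by
  rw [inv_eq_one_div, div_le_div_iff₀ hs (by positivity)]
  nlinarith

lemma integral_inv_mul_log_one_add_one_div_rpow_le {γ a b : ℝ} (hγ : 0 < γ) (ha : 0 < a)
    (hab : a ≤ b) :
    ∫ s in a..b, s⁻¹ * log (1 + 1 / s) ^ (γ - 1)
      ≤ (1 + b) / γ * (log (1 + 1 / a) ^ γ - log (1 + 1 / b) ^ γ) := by
  have hpos : Icc a b ⊆ Ioi 0 := fun s hs => ha.trans_le hs.1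
  have hθ := continuousOn_log_one_add_one_div_rpow
  have hint : IntegrableOn (fun s => s⁻¹ * log (1 + 1 / s) ^ (γ - 1)) (Icc a b) :=
    ((continuousOn_inv₀.mono fun _ hs => ne_of_gt (hpos hs)).mul
      ((hθ (γ - 1)).mono hpos)).integrableOn_compact isCompact_Icc
  have hderiv : ∀ s ∈ Ioo a b,
      HasDerivWithinAt (fun u => -((1 + b) / γ) * log (1 + 1 / u) ^ γ)
        ((1 + b) * log (1 + 1 / s) ^ (γ - 1) / (s * (s + 1))) (Ioi s) s := fun s hs =>
    (((hasDerivAt_log_one_add_one_div_rpow γ (ha.trans hs.1)).const_mul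
      (-((1 + b) / γ))).congr_deriv (by field_simp)).hasDerivWithinAt
  have hle : ∀ s ∈ Ioo a b, s⁻¹ * log (1 + 1 / s) ^ (γ - 1)
      ≤ (1 + b) * log (1 + 1 / s) ^ (γ - 1) / (s * (s + 1)) := fun s hs => by
    have hs0 := ha.trans hs.1
    calc s⁻¹ * log (1 + 1 / s) ^ (γ - 1)
        ≤ (1 + b) / (s * (s + 1)) * log (1 + 1 / s) ^ (γ - 1) :=
          mul_le_mul_of_nonneg_right (inv_le_div_mul_add_one hs0 hs.2.le)
            (rpow_nonneg (log_one_add_one_div_pos hs0).le _)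
      _ = _ := by ring
  have hcont : ContinuousOn (fun u => -((1 + b) / γ) * log (1 + 1 / u) ^ γ) (Icc a b) :=
    continuousOn_const.mul ((hθ γ).mono hpos)
  have := intervalIntegral.integral_le_sub_of_hasDeriv_right_of_le hab hcont hderiv hint hle
  linarith

theorem integral_sublog_bound_general (γ T t : ℝ) (hγ : γ ∈ Set.Ioo (0:ℝ) 1)
    (ht : t ∈ Set.Ioc (0:ℝ) T) :
    ∫ s in Set.Ioc t T, s⁻¹ * (Real.log (1 + 1/s)) ^ (γ - 1)
      ≤ ((1 + T) / γ) * (Real.log (1 + 1/t)) ^ γ := by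
  have hθT : 0 ≤ log (1 + 1 / T) ^ γ :=
    rpow_nonneg (log_one_add_one_div_pos (ht.1.trans_le ht.2)).le _
  rw [← intervalIntegral.integral_of_le ht.2]
  calc ∫ s in t..T, s⁻¹ * log (1 + 1 / s) ^ (γ - 1)
      ≤ (1 + T) / γ * (log (1 + 1 / t) ^ γ - log (1 + 1 / T) ^ γ) :=
        integral_inv_mul_log_one_add_one_div_rpow_le hγ.1 ht.1 ht.2
    _ ≤ (1 + T) / γ * log (1 + 1 / t) ^ γ := by
        have hc : 0 ≤ (1 + T) / γ := div_nonneg (by linarith [ht.1, ht.2]) hγ.1.le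
        exact mul_le_mul_of_nonneg_left (sub_le_self _ hθT) hc

theorem integral_sublog_bound (γ T t : ℝ) (hγ : γ ∈ Set.Ioo (0:ℝ) 1) (hT : 0 < T)
    (ht : t ∈ Set.Ioc (0:ℝ) T) :
    ∫ s in Set.Ioc t T, s⁻¹ * (Real.log (1 + 1/s)) ^ (γ - 1)
      ≤ ((1 + T) / γ) * (Real.log (1 + 1/t)) ^ γ :=
  integral_sublog_bound_general γ T t hγ ht
end

section
/- For every γ ∈ (0,1) there exists a constant C > 0, depending only on γ, such that for all δ ∈ (0,1]: ∫_0^δ (ln(1+1/t))^γ dt ≤ C·δ·(ln(1+1/δ))^γ. -/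
/-!
Write `L = log (1 + 1/δ)`. For `0 < t ≤ δ` one has `1 + 1/t ≤ (1 + 1/δ) · (δ/t)`, so
`log (1 + 1/t) ≤ L + log (δ/t)`; and `y ^ γ ≤ y` for `y ≥ 1`, `γ ≤ 1` gives
`(L + u) ^ γ ≤ L ^ γ (1 + u/L) ≤ L ^ γ (1 + u / log 2)`, as `L ≥ log 2` when `δ ≤ 1`.
Integrating, with `∫₀^δ log (δ/t) dt = δ`, gives the bound with `C = 1 + 1 / log 2`.
-/

open Real Set MeasureTheory

namespace Real

lemma add_rpow_le_rpow_mul_one_add_div {L u γ : ℝ} (hL : 0 < L) (hu : 0 ≤ u) (hγ : γ ≤ 1) :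
    (L + u) ^ γ ≤ L ^ γ * (1 + u / L) := by
  have hsplit : L + u = L * (1 + u / L) := by field_simp
  have hone : 1 ≤ 1 + u / L := le_add_of_nonneg_right (div_nonneg hu hL.le)
  rw [hsplit, mul_rpow hL.le (zero_le_one.trans hone)]
  gcongr
  exact rpow_le_self_of_one_le hone hγ

lemma log_one_add_one_div_le {t δ : ℝ} (ht : 0 < t) (htδ : t ≤ δ) :
    log (1 + 1 / t) ≤ log (1 + 1 / δ) + log (δ / t) := by
  have hδ : 0 < δ := ht.trans_le htδ
  rw [← log_mul (by positivity) (by positivity)]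
  apply log_le_log (by positivity)
  calc 1 + 1 / t = (t + 1) / t := by field_simp
    _ ≤ (δ + 1) / t := by gcongr
    _ = (1 + 1 / δ) * (δ / t) := by field_simp

lemma log_one_add_one_div_nonneg {t : ℝ} (ht : 0 < t) : 0 ≤ log (1 + 1 / t) :=
  log_nonneg (le_add_of_nonneg_right (one_div_pos.2 ht).le)

end Real

section LogDiv

variable {δ : ℝ} (hδ : 0 < δ)
include hδ

lemma eqOn_log_div_Ioc : EqOn (fun t ↦ log (δ / t)) (fun t ↦ log δ - log t) (Ioc 0 δ) :=
  fun _ ht ↦ log_div hδ.ne' ht.1.ne'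

lemma integrableOn_log_div : IntegrableOn (fun t ↦ log (δ / t)) (Ioc 0 δ) := by
  refine IntegrableOn.congr_fun ?_ (eqOn_log_div_Ioc hδ).symm measurableSet_Ioc
  rw [← intervalIntegrable_iff_integrableOn_Ioc_of_le hδ.le]
  exact intervalIntegrable_const.sub intervalIntegral.intervalIntegrable_log'

lemma integral_log_div : ∫ t in Ioc 0 δ, log (δ / t) = δ := by
  rw [setIntegral_congr_fun measurableSet_Ioc (eqOn_log_div_Ioc hδ),
    ← intervalIntegral.integral_of_le hδ.le,
    intervalIntegral.integral_sub intervalIntegrable_const intervalIntegral.intervalIntegrable_log',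
    intervalIntegral.integral_const, integral_log]
  simp

lemma integrableOn_one_add_mul_log_div (a : ℝ) :
    IntegrableOn (fun t ↦ 1 + a * log (δ / t)) (Ioc 0 δ) :=
  (integrableOn_const (C := (1 : ℝ)) measure_Ioc_lt_top.ne).add
    ((integrableOn_log_div hδ).const_mul a)

lemma integral_one_add_mul_log_div (a : ℝ) :
    ∫ t in Ioc 0 δ, (1 + a * log (δ / t)) = (1 + a) * δ := by
  rw [integral_add (integrableOn_const (C := (1 : ℝ)) measure_Ioc_lt_top.ne)
      ((integrableOn_log_div hδ).const_mul a),
    integral_const_mul, integral_log_div hδ, setIntegral_const, Real.volume_real_Ioc_of_le hδ.le]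
  simp only [sub_zero, smul_eq_mul]
  ring

end LogDiv

theorem integral_theta_near_zero (γ : ℝ) (hγ : γ ∈ Set.Ioo (0:ℝ) 1) :
    ∃ C > 0, ∀ δ ∈ Set.Ioc (0:ℝ) 1,
      ∫ t in Set.Ioc (0:ℝ) δ, (Real.log (1 + 1/t)) ^ γ
        ≤ C * δ * (Real.log (1 + 1/δ)) ^ γ := by
  have hlog2 : 0 < log 2 := log_pos one_lt_two
  refine ⟨1 + (log 2)⁻¹, by positivity, fun δ ⟨hδ0, hδ1⟩ ↦ ?_⟩
  set L := log (1 + 1 / δ)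
  have hL : log 2 ≤ L := log_le_log two_pos (by linarith [one_le_one_div hδ0 hδ1])
  have hbound : ∀ t ∈ Ioc 0 δ,
      log (1 + 1 / t) ^ γ ≤ L ^ γ * (1 + (log 2)⁻¹ * log (δ / t)) := by
    rintro t ⟨ht0, htδ⟩
    have hu : 0 ≤ log (δ / t) := log_nonneg ((one_le_div ht0).2 htδ)
    calc log (1 + 1 / t) ^ γ ≤ (L + log (δ / t)) ^ γ :=
          rpow_le_rpow (log_one_add_one_div_nonneg ht0) (log_one_add_one_div_le ht0 htδ) hγ.1.le
      _ ≤ L ^ γ * (1 + log (δ / t) / L) :=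
          add_rpow_le_rpow_mul_one_add_div (hlog2.trans_le hL) hu hγ.2.le
      _ ≤ L ^ γ * (1 + (log 2)⁻¹ * log (δ / t)) := by
          have := rpow_nonneg (hlog2.trans_le hL).le γ
          rw [inv_mul_eq_div]
          gcongr
  calc ∫ t in Ioc 0 δ, log (1 + 1 / t) ^ γ
      ≤ ∫ t in Ioc 0 δ, L ^ γ * (1 + (log 2)⁻¹ * log (δ / t)) :=
        setIntegral_mono_of_nonneg (fun t ht ↦ rpow_nonneg (log_one_add_one_div_nonneg ht.1) γ)
          hbound ((integrableOn_one_add_mul_log_div hδ0 _).const_mul _)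
    _ = (1 + (log 2)⁻¹) * δ * L ^ γ := by
        rw [integral_const_mul, integral_one_add_mul_log_div hδ0]
        ring
end

section
/- Let γ ∈ (0,1] and let 0 < a ≤ b be real numbers. Then (ln(1+1/a))^γ − (ln(1+1/b))^γ ≤ (ln(1+(b−a)/a))^γ. -/
/-!
With `x = log (1 + 1/a) ≥ y = log (1 + 1/b) ≥ 0`, subadditivity of `t ↦ t ^ γ` for `γ ≤ 1`
gives `x ^ γ - y ^ γ ≤ (x - y) ^ γ`, and
`x - y = log (b / a) - log ((b + 1) / (a + 1)) ≤ log (b / a)`.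
-/

open Real

namespace Real

lemma rpow_sub_rpow_le_rpow_sub {x y p : ℝ} (hy : 0 ≤ y) (hyx : y ≤ x) (hp : 0 ≤ p)
    (hp1 : p ≤ 1) : x ^ p - y ^ p ≤ (x - y) ^ p := by
  have h := rpow_add_le_add_rpow hy (sub_nonneg.2 hyx) hp hp1
  rw [add_sub_cancel] at h
  linarith

lemma log_one_add_inv_sub_log_one_add_inv_le {a b : ℝ} (ha : 0 < a) (hab : a ≤ b) :
    log (1 + 1 / a) - log (1 + 1 / b) ≤ log (b / a) := by
  have hb : 0 < b := ha.trans_le hab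
  have hprod : (1 + 1 / b) * (b / a) = (b + 1) / a := by field_simp
  have hle : 1 + 1 / a ≤ (1 + 1 / b) * (b / a) := by
    rw [hprod, one_add_div ha.ne', add_comm a]
    exact div_le_div_of_nonneg_right (by linarith) ha.le
  have hlog := log_le_log (by positivity) hle
  rw [log_mul (by positivity) (by positivity)] at hlog
  linarith

end Real

theorem theta_difference_bound (γ a b : ℝ) (hγ : γ ∈ Set.Ioc (0:ℝ) 1)
    (ha : 0 < a) (hab : a ≤ b) :
    (Real.log (1 + 1/a)) ^ γ - (Real.log (1 + 1/b)) ^ γ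
      ≤ (Real.log (1 + (b - a)/a)) ^ γ := by
  obtain ⟨hγ0, hγ1⟩ := hγ
  have hb : 0 < b := ha.trans_le hab
  have hlog_nonneg : 0 ≤ log (1 + 1 / b) :=
    log_nonneg (le_add_of_nonneg_right (by positivity))
  have hlog_le : log (1 + 1 / b) ≤ log (1 + 1 / a) :=
    log_le_log (by positivity) (by gcongr)
  have hquot : 1 + (b - a) / a = b / a := by field_simp; ring
  calc (log (1 + 1 / a)) ^ γ - (log (1 + 1 / b)) ^ γ
      ≤ (log (1 + 1 / a) - log (1 + 1 / b)) ^ γ :=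
        rpow_sub_rpow_le_rpow_sub hlog_nonneg hlog_le hγ0.le hγ1
    _ ≤ (log (1 + (b - a) / a)) ^ γ := by
        rw [hquot]
        exact rpow_le_rpow (sub_nonneg.2 hlog_le)
          (log_one_add_inv_sub_log_one_add_inv_le ha hab) hγ0.le
end

section
/- Let T > 0, ε ∈ (0,1) and C ≥ 0. Let y : [0,T] → ℝ be continuous and nonnegative, differentiable on (0,T], and let g : [0,T] → ℝ be continuous and nonnegative. Assume y'(t) ≤ C·t^(ε−1)·y(t) + g(t) for all t ∈ (0,T]. Then for all t ∈ [0,T]: y(t) ≤ exp(C·t^ε/ε)·( y(0) + ∫_0^t g(τ) dτ ). -/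
/-!
Multiply by the integrating factor `exp (-C t^ε / ε)`, whose derivative `-C t^(ε-1) exp (-C t^ε / ε)`
absorbs the singular coefficient: since the factor lies in `(0, 1]` and `g ≥ 0`, the function
`exp (-C t^ε / ε) y(t) - ∫₀ᵗ g` has nonpositive derivative on `(0, T)`, hence is antitone on
`[0, T]` and bounded by its value `y 0` at `0`.
-/

open Real Set MeasureTheory intervalIntegral

theorem hasDerivAt_integral_of_continuousOn_Icc {a b t : ℝ} {g : ℝ → ℝ}
    (hg : ContinuousOn g (Icc a b)) (ht : t ∈ Ioo a b) :
    HasDerivAt (fun s => ∫ τ in a..s, g τ) (g t) t :=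
  integral_hasDerivAt_right
    ((hg.mono (Icc_subset_Icc le_rfl ht.2.le)).intervalIntegrable_of_Icc ht.1.le)
    ((hg.mono Ioo_subset_Icc_self).stronglyMeasurableAtFilter isOpen_Ioo t ht)
    (hg.continuousAt (Icc_mem_nhds ht.1 ht.2))

theorem continuousOn_integral_of_continuousOn_Icc {a b : ℝ} {g : ℝ → ℝ}
    (hab : a ≤ b) (hg : ContinuousOn g (Icc a b)) :
    ContinuousOn (fun s => ∫ τ in a..s, g τ) (Icc a b) := by
  simpa only [uIcc_of_le hab] using
    continuousOn_primitive_interval' (hg.intervalIntegrable_of_Icc hab) left_mem_uIcc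

section IntegratingFactor

variable {a b : ℝ} {y y' k K g : ℝ → ℝ}

theorem antitoneOn_exp_mul_sub_integral
    (hK_cont : ContinuousOn K (Icc a b)) (hK : ∀ t ∈ Ioo a b, HasDerivAt K (k t) t)
    (hK_mono : MonotoneOn K (Icc a b))
    (hy_cont : ContinuousOn y (Icc a b)) (hy : ∀ t ∈ Ioo a b, HasDerivAt y (y' t) t)
    (hg_cont : ContinuousOn g (Icc a b)) (hg : ∀ t ∈ Ioo a b, 0 ≤ g t)
    (hineq : ∀ t ∈ Ioo a b, y' t ≤ k t * y t + g t) (hab : a ≤ b) :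
    AntitoneOn (fun s => exp (K a - K s) * y s - ∫ τ in a..s, g τ) (Icc a b) := by
  refine antitoneOn_of_hasDerivWithinAt_nonpos (convex_Icc a b)
    ((((continuousOn_const.sub hK_cont).rexp).mul hy_cont).sub
      (continuousOn_integral_of_continuousOn_Icc hab hg_cont))
    (f' := fun t => exp (K a - K t) * (y' t - k t * y t) - g t) ?_ ?_ <;>
    rw [interior_Icc] <;> intro t ht
  · have hE := ((hK t ht).const_sub (K a)).exp
    refine (((hE.mul (hy t ht)).sub
      (hasDerivAt_integral_of_continuousOn_Icc hg_cont ht)).congr_deriv ?_).hasDerivWithinAt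
    ring
  · have hE_le_one : exp (K a - K t) ≤ 1 :=
      exp_le_one_iff.mpr (sub_nonpos.mpr (hK_mono (left_mem_Icc.mpr hab)
        (Ioo_subset_Icc_self ht) ht.1.le))
    calc exp (K a - K t) * (y' t - k t * y t) - g t
        ≤ exp (K a - K t) * g t - g t := by
          gcongr
          linarith [hineq t ht]
      _ ≤ 0 := by nlinarith [hg t ht]

theorem le_exp_mul_add_integral_of_hasDerivAt_le
    (hK_cont : ContinuousOn K (Icc a b)) (hK : ∀ t ∈ Ioo a b, HasDerivAt K (k t) t)
    (hk : ∀ t ∈ Ioo a b, 0 ≤ k t)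
    (hy_cont : ContinuousOn y (Icc a b)) (hy : ∀ t ∈ Ioo a b, HasDerivAt y (y' t) t)
    (hg_cont : ContinuousOn g (Icc a b)) (hg : ∀ t ∈ Ioo a b, 0 ≤ g t)
    (hineq : ∀ t ∈ Ioo a b, y' t ≤ k t * y t + g t) :
    ∀ t ∈ Icc a b, y t ≤ exp (K t - K a) * (y a + ∫ τ in a..t, g τ) := by
  intro t ht
  have hab : a ≤ b := ht.1.trans ht.2
  have hK_mono : MonotoneOn K (Icc a b) :=
    monotoneOn_of_hasDerivWithinAt_nonneg (convex_Icc a b) hK_cont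
      (by simpa only [interior_Icc] using fun t ht => (hK t ht).hasDerivWithinAt)
      (by simpa only [interior_Icc] using hk)
  have hF := antitoneOn_exp_mul_sub_integral hK_cont hK hK_mono hy_cont hy hg_cont hg hineq hab
    (left_mem_Icc.mpr hab) ht ht.1
  simp only [sub_self, exp_zero, one_mul, integral_same, sub_zero] at hF
  calc y t = exp (K t - K a) * (exp (K a - K t) * y t) := by
        rw [← mul_assoc, ← exp_add]; simp
    _ ≤ exp (K t - K a) * (y a + ∫ τ in a..t, g τ) := by gcongr; linarith

end IntegratingFactor

theorem hasDerivAt_const_mul_rpow_div {C ε t : ℝ} (hε : ε ≠ 0) (ht : 0 < t) :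
    HasDerivAt (fun s => C * s ^ ε / ε) (C * t ^ (ε - 1)) t := by
  refine (((hasDerivAt_rpow_const (Or.inl ht.ne')).const_mul C).div_const ε).congr_deriv ?_
  rw [mul_left_comm, mul_div_cancel_left₀ _ hε]

theorem singular_gronwall_general (T ε C : ℝ) (hε : ε ∈ Set.Ioo (0:ℝ) 1)
    (hC : 0 ≤ C) (y y' g : ℝ → ℝ)
    (hy_cont : ContinuousOn y (Set.Icc 0 T))
    (hy_deriv : ∀ t ∈ Set.Ioc (0:ℝ) T, HasDerivAt y (y' t) t)
    (hg_cont : ContinuousOn g (Set.Icc 0 T))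
    (hg_nonneg : ∀ t ∈ Set.Icc (0:ℝ) T, 0 ≤ g t)
    (hineq : ∀ t ∈ Set.Ioc (0:ℝ) T, y' t ≤ C * t ^ (ε - 1) * y t + g t) :
    ∀ t ∈ Set.Icc (0:ℝ) T,
      y t ≤ Real.exp (C * t ^ ε / ε) * (y 0 + ∫ τ in (0:ℝ)..t, g τ) := by
  intro t ht
  have hK_cont : Continuous fun s : ℝ => C * s ^ ε / ε :=
    (continuous_const.mul (continuous_id.rpow_const fun _ => Or.inr hε.1.le)).div_const ε
  have h := le_exp_mul_add_integral_of_hasDerivAt_le hK_cont.continuousOn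
    (fun s hs => hasDerivAt_const_mul_rpow_div hε.1.ne' hs.1)
    (fun s hs => mul_nonneg hC (rpow_nonneg hs.1.le _)) hy_cont
    (fun s hs => hy_deriv s (Ioo_subset_Ioc_self hs)) hg_cont
    (fun s hs => hg_nonneg s (Ioo_subset_Icc_self hs))
    (fun s hs => hineq s (Ioo_subset_Ioc_self hs)) t ht
  simpa [zero_rpow hε.1.ne'] using h

theorem singular_gronwall (T ε C : ℝ) (hT : 0 < T) (hε : ε ∈ Set.Ioo (0:ℝ) 1)
    (hC : 0 ≤ C) (y y' g : ℝ → ℝ)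
    (hy_cont : ContinuousOn y (Set.Icc 0 T))
    (hy_nonneg : ∀ t ∈ Set.Icc (0:ℝ) T, 0 ≤ y t)
    (hy_deriv : ∀ t ∈ Set.Ioc (0:ℝ) T, HasDerivAt y (y' t) t)
    (hg_cont : ContinuousOn g (Set.Icc 0 T))
    (hg_nonneg : ∀ t ∈ Set.Icc (0:ℝ) T, 0 ≤ g t)
    (hineq : ∀ t ∈ Set.Ioc (0:ℝ) T, y' t ≤ C * t ^ (ε - 1) * y t + g t) :
    ∀ t ∈ Set.Icc (0:ℝ) T,
      y t ≤ Real.exp (C * t ^ ε / ε) * (y 0 + ∫ τ in (0:ℝ)..t, g τ) :=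
  singular_gronwall_general T ε C hε hC y y' g hy_cont hy_deriv hg_cont hg_nonneg hineq
end

section
/- Let f(t) = 50·√(ln(1/t)) + sin(400·√(ln(1/t))) for t ∈ (0, 1/10]. Then f is differentiable on (0,1/10] with f'(t) = −(25 + 200·cos(400·√(ln(1/t))))/(t·√(ln(1/t))), and there exists a constant C > 0 such that |f'(t)| ≤ C·t⁻¹·(ln(1+1/t))^(−1/2) for all t ∈ (0,1/10]. Thus f satisfies the first-derivative estimate (1.3) with γ = 1/2 and ω ≡ Φ ≡ 1. -/
open Real Set

/-! Writing `L = log (1/t)`, the chain rule gives `f' t = -(25 + 200 cos (400 √L)) / (t √L)`.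
The numerator is bounded by `225`, and for `t ≤ 1/2` we have `1 + 1/t ≤ 1/t²`, hence
`log (1 + 1/t) ≤ 2 L` and `1 / √L ≤ √2 / √(log (1 + 1/t))`; so `C = 225 √2` works. -/

lemma sqrt_log_one_div_pos {t : ℝ} (ht₀ : 0 < t) (ht₁ : t < 1) : 0 < √(log (1 / t)) :=
  sqrt_pos.2 (log_pos (one_lt_one_div ht₀ ht₁))

lemma hasDerivAt_log_one_div {t : ℝ} (ht : 0 < t) :
    HasDerivAt (fun s : ℝ => log (1 / s)) (-t⁻¹) t := by
  simpa only [one_div, log_inv] using (hasDerivAt_log ht.ne').fun_neg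

lemma hasDerivAt_sqrt_log_one_div {t : ℝ} (ht₀ : 0 < t) (ht₁ : t < 1) :
    HasDerivAt (fun s : ℝ => √(log (1 / s))) (-(2 * t * √(log (1 / t)))⁻¹) t := by
  have hL := sqrt_log_one_div_pos ht₀ ht₁
  convert (hasDerivAt_log_one_div ht₀).sqrt (sqrt_pos.1 hL).ne' using 1
  field_simp

lemma HasDerivAt.const_mul_add_sin_const_mul {u : ℝ → ℝ} {u' t : ℝ} (a b : ℝ)
    (hu : HasDerivAt u u' t) :
    HasDerivAt (fun s => a * u s + Real.sin (b * u s)) ((a + b * Real.cos (b * u t)) * u') t :=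
  ((hu.const_mul a).fun_add (hu.const_mul b).sin).congr_deriv (by ring)

lemma rpow_neg_one_div_two {x : ℝ} (hx : 0 ≤ x) : x ^ (-(1 : ℝ) / 2) = (√x)⁻¹ := by
  rw [neg_div, rpow_neg hx, sqrt_eq_rpow]

lemma log_one_add_one_div_le {t : ℝ} (ht₀ : 0 < t) (ht : t ≤ 1 / 2) :
    log (1 + 1 / t) ≤ 2 * log (1 / t) := by
  have h2 : 2 ≤ 1 / t := by rw [le_one_div (by norm_num) ht₀]; linarith
  calc log (1 + 1 / t) ≤ log ((1 / t) ^ 2) := log_le_log (by positivity) (by nlinarith)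
    _ = 2 * log (1 / t) := by rw [log_pow]; norm_num

lemma sqrt_log_one_add_one_div_le {t : ℝ} (ht₀ : 0 < t) (ht : t ≤ 1 / 2) :
    √(log (1 + 1 / t)) ≤ √2 * √(log (1 / t)) := by
  rw [← sqrt_mul zero_le_two]
  exact sqrt_le_sqrt (log_one_add_one_div_le ht₀ ht)

lemma abs_div_mul_sqrt_log_one_div_le {t a K : ℝ} (ht₀ : 0 < t) (ht : t ≤ 1 / 2)
    (ha : |a| ≤ K) :
    |a / (t * √(log (1 / t)))| ≤ √2 * K * t⁻¹ * log (1 + 1 / t) ^ (-(1 : ℝ) / 2) := by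
  have hL := sqrt_log_one_div_pos ht₀ (by linarith)
  have hM : 0 < log (1 + 1 / t) := log_pos (lt_add_of_pos_right 1 (by positivity))
  have hML : √(log (1 + 1 / t)) / √2 ≤ √(log (1 / t)) := by
    rw [div_le_iff₀ (by positivity), mul_comm]
    exact sqrt_log_one_add_one_div_le ht₀ ht
  rw [rpow_neg_one_div_two hM.le]
  calc |a / (t * √(log (1 / t)))| = |a| / (t * √(log (1 / t))) := by
        rw [abs_div, abs_of_pos (mul_pos ht₀ hL)]
    _ ≤ K / (t * (√(log (1 + 1 / t)) / √2)) := by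
        have hM' : 0 < √(log (1 + 1 / t)) := sqrt_pos.2 hM
        gcongr
        exact (abs_nonneg a).trans ha
    _ = √2 * K * t⁻¹ * (√(log (1 + 1 / t)))⁻¹ := by field_simp

theorem example_first_derivative :
    (∀ t ∈ Set.Ioc (0:ℝ) (1/10),
      HasDerivAt
        (fun s : ℝ => 50 * Real.sqrt (Real.log (1/s))
          + Real.sin (400 * Real.sqrt (Real.log (1/s))))
        (-(25 + 200 * Real.cos (400 * Real.sqrt (Real.log (1/t))))
          / (t * Real.sqrt (Real.log (1/t)))) t) ∧
    ∃ C > 0, ∀ t ∈ Set.Ioc (0:ℝ) (1/10),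
      |(-(25 + 200 * Real.cos (400 * Real.sqrt (Real.log (1/t))))
          / (t * Real.sqrt (Real.log (1/t))))|
        ≤ C * t⁻¹ * (Real.log (1 + 1/t)) ^ (-(1:ℝ)/2) := by
  refine ⟨fun t ⟨ht₀, ht⟩ => ?_, √2 * 225, by positivity, fun t ⟨ht₀, ht⟩ => ?_⟩
  · have hL := sqrt_log_one_div_pos ht₀ (by linarith)
    convert (hasDerivAt_sqrt_log_one_div ht₀ (by linarith)).const_mul_add_sin_const_mul 50 400
      using 1
    field_simp
    ring
  · refine abs_div_mul_sqrt_log_one_div_le ht₀ (by linarith) ?_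
    set x := 400 * √(log (1 / t))
    rw [abs_neg, abs_le]
    constructor <;> linarith [neg_one_le_cos x, cos_le_one x]
end

section
/- Let γ ∈ (0,1), κ₁ ∈ [0,1], κ₂ ∈ (0,1] with κ₁ ≤ κ₂, and for t ∈ (0,1], x ∈ ℝ define a(t,x) = ⟨x⟩^(2κ₁)·( 2 + sin(⟨x⟩^(1−κ₂) + cos x · (ln(1+1/t))^γ) + (2 + cos(⟨x⟩^(1−κ₂)))·(ln(1+1/t))^γ ), where ⟨x⟩ = (1+x²)^(1/2). Then for each x, the function t ↦ a(t,x) is differentiable on (0,1] and |∂_t a(t,x)| ≤ 4γ·⟨x⟩^(2κ₁)·t⁻¹·(ln(1+1/t))^(γ−1) for all (t,x) ∈ (0,1] × ℝ; that is, a satisfies the singular time-derivative estimate (1.3) with |β| = 0 and ω(x) = ⟨x⟩^(κ₁). -/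
open Real Set

theorem example1_time_derivative (γ κ₁ κ₂ : ℝ) (hγ : γ ∈ Set.Ioo (0:ℝ) 1)
    (hκ₁ : κ₁ ∈ Set.Icc (0:ℝ) 1) (hκ₂ : κ₂ ∈ Set.Ioc (0:ℝ) 1) (hκ : κ₁ ≤ κ₂) :
    ∀ x : ℝ, ∃ a' : ℝ → ℝ,
      (∀ t ∈ Set.Ioc (0:ℝ) 1,
        HasDerivAt
          (fun s : ℝ => ((1 + x^2) ^ ((1:ℝ)/2)) ^ (2*κ₁) *
            (2 + Real.sin (((1 + x^2) ^ ((1:ℝ)/2)) ^ (1 - κ₂)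
                  + Real.cos x * (Real.log (1 + 1/s)) ^ γ)
              + (2 + Real.cos (((1 + x^2) ^ ((1:ℝ)/2)) ^ (1 - κ₂)))
                  * (Real.log (1 + 1/s)) ^ γ))
          (a' t) t) ∧
      (∀ t ∈ Set.Ioc (0:ℝ) 1,
        |a' t| ≤ 4 * γ * ((1 + x^2) ^ ((1:ℝ)/2)) ^ (2*κ₁) * t⁻¹
          * (Real.log (1 + 1/t)) ^ (γ - 1)) := by
  intro x
  set c : ℝ := ((1 + x^2) ^ ((1:ℝ)/2)) ^ (2*κ₁) with hc
  set A : ℝ := ((1 + x^2) ^ ((1:ℝ)/2)) ^ (1 - κ₂) with hA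
  have hc0 : 0 ≤ c := by positivity
  refine ⟨fun t => c * (Real.cos (A + Real.cos x * (Real.log (1 + 1/t)) ^ γ) *
      (Real.cos x * ((-(t^2)⁻¹ / (1 + 1/t)) * γ * (Real.log (1 + 1/t)) ^ (γ - 1)))
    + (2 + Real.cos A) *
      ((-(t^2)⁻¹ / (1 + 1/t)) * γ * (Real.log (1 + 1/t)) ^ (γ - 1))), ?_, ?_⟩
  · intro t ht
    have ht0 : 0 < t := ht.1
    have hL : 0 < Real.log (1 + 1/t) := Real.log_pos (by
      have : 0 < 1/t := by positivity
      linarith)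
    have h1 : HasDerivAt (fun s : ℝ => 1 + 1/s) (-(t^2)⁻¹) t := by
      simpa [one_div] using (hasDerivAt_inv ht0.ne').const_add 1
    have h2 : HasDerivAt (fun s : ℝ => Real.log (1 + 1/s)) (-(t^2)⁻¹ / (1 + 1/t)) t :=
      h1.log (by positivity)
    have h3 : HasDerivAt (fun s : ℝ => (Real.log (1 + 1/s)) ^ γ)
        ((-(t^2)⁻¹ / (1 + 1/t)) * γ * (Real.log (1 + 1/t)) ^ (γ - 1)) t :=
      h2.rpow_const (Or.inl hL.ne')
    have h4 : HasDerivAt (fun s : ℝ => A + Real.cos x * (Real.log (1 + 1/s)) ^ γ)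
        (Real.cos x * ((-(t^2)⁻¹ / (1 + 1/t)) * γ * (Real.log (1 + 1/t)) ^ (γ - 1))) t :=
      (h3.const_mul (Real.cos x)).const_add A
    have h5 := h4.sin
    have h6 := h3.const_mul (2 + Real.cos A)
    exact ((h5.const_add 2).add h6).const_mul c
  · intro t ht
    have ht0 : 0 < t := ht.1
    have hL : 0 < Real.log (1 + 1/t) := Real.log_pos (by
      have : 0 < 1/t := by positivity
      linarith)
    beta_reduce
    set P : ℝ := (Real.log (1 + 1/t)) ^ (γ - 1) with hPdef
    have hP : 0 ≤ P := Real.rpow_nonneg hL.le _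
    clear_value P
    have hγ0 : 0 < γ := hγ.1
    set D : ℝ := (-(t^2)⁻¹ / (1 + 1/t)) * γ * P with hDdef
    have hkey : (t^2)⁻¹ / (1 + 1/t) ≤ t⁻¹ := by
      rw [div_le_iff₀ (by positivity)]
      have e : t⁻¹ * (1 + 1/t) = (t^2)⁻¹ + t⁻¹ := by
        field_simp
        ring
      have : (0:ℝ) < t⁻¹ := by positivity
      linarith
    have hDabs : |D| ≤ γ * t⁻¹ * P := by
      have hD0 : D ≤ 0 := by
        apply mul_nonpos_of_nonpos_of_nonneg _ hP
        apply mul_nonpos_of_nonpos_of_nonneg _ hγ0.le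
        apply div_nonpos_of_nonpos_of_nonneg (neg_nonpos.mpr (by positivity)) (by positivity)
      rw [abs_of_nonpos hD0]
      have : -D = ((t^2)⁻¹ / (1 + 1/t)) * γ * P := by rw [hDdef]; ring
      rw [this]
      have := mul_le_mul_of_nonneg_right (mul_le_mul_of_nonneg_right hkey hγ0.le) hP
      linarith
    clear_value D
    have h1 : |Real.cos (A + Real.cos x * (Real.log (1 + 1/t)) ^ γ)| ≤ 1 :=
      Real.abs_cos_le_one _
    have h2 : |Real.cos x| ≤ 1 := Real.abs_cos_le_one _
    have h3 : |2 + Real.cos A| ≤ 3 := by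
      have := Real.neg_one_le_cos A
      have := Real.cos_le_one A
      rw [abs_le]; constructor <;> linarith
    have hD0 : 0 ≤ |D| := abs_nonneg _
    have step : |Real.cos (A + Real.cos x * (Real.log (1 + 1/t)) ^ γ) *
        (Real.cos x * D) + (2 + Real.cos A) * D| ≤ 4 * |D| := by
      calc |Real.cos (A + Real.cos x * (Real.log (1 + 1/t)) ^ γ) * (Real.cos x * D)
            + (2 + Real.cos A) * D|
          ≤ |Real.cos (A + Real.cos x * (Real.log (1 + 1/t)) ^ γ) * (Real.cos x * D)|
            + |(2 + Real.cos A) * D| := abs_add_le _ _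
        _ = |Real.cos (A + Real.cos x * (Real.log (1 + 1/t)) ^ γ)| * (|Real.cos x| * |D|)
            + |2 + Real.cos A| * |D| := by rw [abs_mul, abs_mul, abs_mul]
        _ ≤ 1 * (1 * |D|) + 3 * |D| := by gcongr
        _ = 4 * |D| := by ring
    calc |c * (Real.cos (A + Real.cos x * (Real.log (1 + 1/t)) ^ γ) * (Real.cos x * D)
          + (2 + Real.cos A) * D)|
        = c * |Real.cos (A + Real.cos x * (Real.log (1 + 1/t)) ^ γ) * (Real.cos x * D)
          + (2 + Real.cos A) * D| := by rw [abs_mul, abs_of_nonneg hc0]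
      _ ≤ c * (4 * |D|) := mul_le_mul_of_nonneg_left step hc0
      _ ≤ c * (4 * (γ * t⁻¹ * P)) := by
          apply mul_le_mul_of_nonneg_left _ hc0
          linarith
      _ = 4 * γ * c * t⁻¹ * P := by ring
end

section
/- Let γ ∈ (0,1). There exists a constant κ > 0, depending only on γ, such that for all real numbers w, p, ζ with 1 ≤ w ≤ p and ζ ≥ 1: w²·ζ²·∫_0^(2/(pζ)) (ln(1+1/t))^γ dt ≤ κ·w·ζ·(ln(1+pζ))^γ. -/
open Real Set MeasureTheory

set_option maxHeartbeats 1000000 in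
lemma excision_aux {γ : ℝ} (hγ0 : 0 < γ) (hγ1 : γ ≤ 1) {ε : ℝ} (hε0 : 0 < ε) (hε2 : ε ≤ 2) :
    ∫ t in Set.Ioc (0:ℝ) ε, (Real.log (1 + 1/t)) ^ γ ≤
      (12 * (2 * (1 + Real.log 3 / Real.log (3/2)) / Real.log (3/2))) *
        (ε * (Real.log (1 + 1/ε)) ^ γ) := by
  have hl32 : 0 < Real.log (3/2) := Real.log_pos (by norm_num)
  have hl32half : Real.log (3/2) ≤ 1/2 := by
    have := Real.log_le_sub_one_of_pos (x := 3/2) (by norm_num); linarith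
  have hlog3 : 0 ≤ Real.log 3 := Real.log_nonneg (by norm_num)
  set l32 := Real.log (3/2) with hl32def
  have hM0 : 0 < Real.log (3/ε) := Real.log_pos (by rw [lt_div_iff₀ hε0]; linarith)
  have hMl32 : l32 ≤ Real.log (3/ε) := by
    apply Real.log_le_log (by norm_num)
    rw [div_le_div_iff₀ (by norm_num) hε0]; linarith
  have hMsplit : Real.log (3/ε) = Real.log 3 - Real.log ε :=
    Real.log_div (by norm_num) (ne_of_gt hε0)
  set M := Real.log (3/ε) with hMdef
  have hL0 : 0 < Real.log (1 + 1/ε) := Real.log_pos (by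
    have : (1:ℝ)/2 ≤ 1/ε := one_div_le_one_div_of_le hε0 hε2
    linarith)
  have hLl32 : l32 ≤ Real.log (1 + 1/ε) := by
    apply Real.log_le_log (by norm_num)
    have : (1:ℝ)/2 ≤ 1/ε := one_div_le_one_div_of_le hε0 hε2
    linarith
  have hML : M ≤ (1 + Real.log 3 / l32) * Real.log (1 + 1/ε) := by
    have h1 : -Real.log ε = Real.log ε⁻¹ := (Real.log_inv ε).symm
    have h2 : Real.log ε⁻¹ ≤ Real.log (1 + 1/ε) := by
      apply Real.log_le_log (by positivity)
      rw [inv_eq_one_div]; linarith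
    have h3 : Real.log 3 ≤ Real.log 3 / l32 * Real.log (1 + 1/ε) := by
      rw [div_mul_eq_mul_div, le_div_iff₀ hl32]
      nlinarith
    rw [hMsplit]
    nlinarith
  set L := Real.log (1 + 1/ε) with hLdef
  clear_value l32 M L
  -- δ
  have hMne : M ≠ 0 := ne_of_gt hM0
  set δ := l32 / (2 * M) with hδdef
  have hδ0 : 0 < δ := by positivity
  have hδhalf : δ ≤ 1/2 := by rw [hδdef, div_le_iff₀ (by positivity)]; linarith
  have hδM : δ * M = l32 / 2 := by rw [hδdef]; field_simp
  have h1δ : 1/δ = 2 * M / l32 := by rw [hδdef]; rw [one_div_div]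
  clear_value δ
  have hδne : δ ≠ 0 := ne_of_gt hδ0
  have hδγ0 : 0 ≤ δ * γ := by positivity
  have hδγhalf : δ * γ ≤ 1/2 := by nlinarith
  set r := -(δ * γ) with hrdef
  have hr : (-1:ℝ) < r := by rw [hrdef]; linarith
  clear_value r
  set K := (1/δ) ^ γ * (3:ℝ) ^ (δ * γ) with hKdef
  clear_value K
  set c₃ := 2 * (1 + Real.log 3 / l32) / l32 with hc₃def
  have hc₃1 : 1 ≤ c₃ := by
    rw [hc₃def, le_div_iff₀ hl32]
    have h0 : 0 ≤ Real.log 3 / l32 := by positivity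
    nlinarith
  clear_value c₃
  -- pointwise bound
  have hpt : ∀ t ∈ Set.Ioc (0:ℝ) ε, (Real.log (1 + 1/t)) ^ γ ≤ K * t ^ r := by
    rintro t ⟨ht0, htε⟩
    have ht2 : t ≤ 2 := htε.trans hε2
    have h3t : 0 < 3/t := by positivity
    have h1 : Real.log (1 + 1/t) ≤ Real.log (3/t) := by
      apply Real.log_le_log (by positivity)
      have hkey : 3/t - (1 + 1/t) = (2 - t)/t := by field_simp; ring
      have : 0 ≤ (2 - t)/t := div_nonneg (by linarith) ht0.le
      linarith
    have h2 : Real.log (3/t) ≤ (1/δ) * (3/t) ^ δ := by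
      have hlr : Real.log ((3/t) ^ δ) = δ * Real.log (3/t) := Real.log_rpow h3t δ
      have h4 : Real.log ((3/t) ^ δ) ≤ (3/t) ^ δ - 1 :=
        Real.log_le_sub_one_of_pos (Real.rpow_pos_of_pos h3t δ)
      calc Real.log (3/t) = (1/δ) * Real.log ((3/t) ^ δ) := by
            rw [hlr, ← mul_assoc, one_div, inv_mul_cancel₀ hδne, one_mul]
        _ ≤ (1/δ) * ((3/t) ^ δ - 1) :=
            mul_le_mul_of_nonneg_left h4 (by positivity)
        _ ≤ (1/δ) * (3/t) ^ δ := by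
            have h1δ' : 0 ≤ 1/δ := by positivity
            nlinarith
    have h0log : 0 ≤ Real.log (1 + 1/t) := Real.log_nonneg (by
      have : 0 ≤ 1/t := by positivity
      linarith)
    calc (Real.log (1 + 1/t)) ^ γ ≤ ((1/δ) * (3/t) ^ δ) ^ γ :=
          Real.rpow_le_rpow h0log (h1.trans h2) hγ0.le
      _ = (1/δ) ^ γ * ((3/t) ^ δ) ^ γ :=
          Real.mul_rpow (by positivity) (by positivity)
      _ = (1/δ) ^ γ * (3/t) ^ (δ * γ) := by rw [← Real.rpow_mul h3t.le]
      _ = (1/δ) ^ γ * ((3:ℝ) ^ (δ*γ) / t ^ (δ*γ)) := by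
          rw [Real.div_rpow (by norm_num) ht0.le]
      _ = K * t ^ r := by
          rw [hKdef, hrdef, Real.rpow_neg ht0.le]
          ring
  -- integral comparison
  have hint : IntegrableOn (fun t => K * t ^ r) (Set.Ioc (0:ℝ) ε) :=
    ((intervalIntegral.intervalIntegrable_rpow' hr (a := 0) (b := ε)).1).const_mul K
  have hmono : ∫ t in Set.Ioc (0:ℝ) ε, (Real.log (1 + 1/t)) ^ γ ≤
      ∫ t in Set.Ioc (0:ℝ) ε, K * t ^ r := by
    apply integral_mono_of_nonneg _ hint
    · filter_upwards [ae_restrict_mem measurableSet_Ioc] with t ht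
      exact hpt t ht
    · filter_upwards [ae_restrict_mem measurableSet_Ioc] with t ht
      have ht0 := ht.1
      apply Real.rpow_nonneg
      apply Real.log_nonneg
      have : 0 ≤ 1/t := by positivity
      linarith
  -- compute the majorant integral
  have hval : ∫ t in Set.Ioc (0:ℝ) ε, K * t ^ r = K * (ε ^ (r+1) / (r+1)) := by
    rw [MeasureTheory.integral_const_mul]
    congr 1
    rw [← intervalIntegral.integral_of_le hε0.le, integral_rpow (Or.inl hr),
      Real.zero_rpow (by linarith), sub_zero]
  -- bound ε ^ (r+1) ≤ 2 * ε
  have hexphalf : Real.exp (1/2) < 2 := by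
    have h1 : Real.exp (1/2) * Real.exp (1/2) = Real.exp 1 := by
      rw [← Real.exp_add]; norm_num
    have h2 := Real.exp_one_lt_d9
    have h3 := Real.exp_pos (1/2)
    nlinarith
  have hεr : ε ^ r ≤ 2 := by
    have h1 : ε ^ r = (ε⁻¹) ^ (δ * γ) := by
      rw [hrdef, Real.rpow_neg hε0.le, ← Real.inv_rpow hε0.le]
    have h2 : (ε⁻¹) ^ (δ*γ) ≤ (3/ε) ^ (δ*γ) := by
      apply Real.rpow_le_rpow (by positivity) _ hδγ0
      rw [inv_eq_one_div]
      gcongr <;> norm_num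
    have h3 : (3/ε) ^ (δ*γ) = Real.exp (l32 / 2 * γ) := by
      rw [Real.rpow_def_of_pos (by positivity), ← hMdef, ← mul_assoc, mul_comm M δ, hδM]
    have h4 : Real.exp (l32 / 2 * γ) ≤ Real.exp (1/2) := by
      apply Real.exp_le_exp.2
      nlinarith
    rw [h1]
    calc (ε⁻¹) ^ (δ*γ) ≤ (3/ε) ^ (δ*γ) := h2
      _ = Real.exp (l32/2*γ) := h3
      _ ≤ Real.exp (1/2) := h4
      _ ≤ 2 := hexphalf.le
  have hεr1 : ε ^ (r+1) ≤ 2 * ε := by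
    have hsplit : ε ^ (r+1) = ε ^ r * ε := by
      rw [Real.rpow_add hε0, Real.rpow_one]
    rw [hsplit]
    nlinarith [Real.rpow_nonneg hε0.le r]
  have hr1pos : (1:ℝ)/2 ≤ r + 1 := by rw [hrdef]; linarith
  have hfrac : ε ^ (r+1) / (r+1) ≤ 4 * ε := by
    calc ε ^ (r+1) / (r+1) ≤ (2*ε) / (1/2) := by
          apply div_le_div₀ (by positivity) hεr1 (by norm_num) hr1pos
      _ = 4 * ε := by ring
  -- bound K
  have hKbound : K ≤ (c₃ * L ^ γ) * 3 := by
    have hb1 : (3:ℝ) ^ (δ*γ) ≤ 3 := by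
      calc (3:ℝ) ^ (δ*γ) ≤ (3:ℝ) ^ (1:ℝ) :=
            Real.rpow_le_rpow_of_exponent_le (by norm_num) (by nlinarith)
        _ = 3 := Real.rpow_one 3
    have hb2 : (1/δ) ^ γ ≤ c₃ * L ^ γ := by
      have hδL : 1/δ ≤ c₃ * L := by
        rw [h1δ, hc₃def, div_mul_eq_mul_div, div_le_div_iff₀ hl32 hl32]
        nlinarith
      calc (1/δ) ^ γ ≤ (c₃ * L) ^ γ :=
            Real.rpow_le_rpow (by positivity) hδL hγ0.le
        _ = c₃ ^ γ * L ^ γ := Real.mul_rpow (by positivity) hL0.le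
        _ ≤ c₃ * L ^ γ := by
            have hcc : c₃ ^ γ ≤ c₃ := by
              calc c₃ ^ γ ≤ c₃ ^ (1:ℝ) := Real.rpow_le_rpow_of_exponent_le hc₃1 hγ1
                _ = c₃ := Real.rpow_one c₃
            have hLγ : 0 ≤ L ^ γ := Real.rpow_nonneg hL0.le γ
            nlinarith
    rw [hKdef]
    have h3nn : (0:ℝ) ≤ (3:ℝ) ^ (δ*γ) := Real.rpow_nonneg (by norm_num) _
    have h1δnn : (0:ℝ) ≤ (1/δ) ^ γ := Real.rpow_nonneg (by positivity) _
    have hcLnn : 0 ≤ c₃ * L ^ γ := by positivity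
    nlinarith
  -- combine
  have hfracnn : 0 ≤ ε ^ (r+1) / (r+1) :=
    div_nonneg (Real.rpow_nonneg hε0.le _) (by linarith)
  calc ∫ t in Set.Ioc (0:ℝ) ε, (Real.log (1 + 1/t)) ^ γ
      ≤ ∫ t in Set.Ioc (0:ℝ) ε, K * t ^ r := hmono
    _ = K * (ε ^ (r+1) / (r+1)) := hval
    _ ≤ ((c₃ * L ^ γ) * 3) * (4 * ε) :=
        mul_le_mul hKbound hfrac hfracnn (by positivity)
    _ = 12 * c₃ * (ε * L ^ γ) := by ring

set_option maxHeartbeats 1000000 in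
theorem excision_L1_estimate (γ : ℝ) (hγ : γ ∈ Set.Ioo (0:ℝ) 1) :
    ∃ κ > 0, ∀ w p ζ : ℝ, 1 ≤ w → w ≤ p → 1 ≤ ζ →
      w^2 * ζ^2 * ∫ t in Set.Ioc (0:ℝ) (2/(p*ζ)), (Real.log (1 + 1/t)) ^ γ
        ≤ κ * w * ζ * (Real.log (1 + p*ζ)) ^ γ := by
  obtain ⟨hγ0, hγ1⟩ := hγ
  have hl32 : 0 < Real.log (3/2) := Real.log_pos (by norm_num)
  have hlog3 : 0 ≤ Real.log 3 := Real.log_nonneg (by norm_num)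
  set C := 12 * (2 * (1 + Real.log 3 / Real.log (3/2)) / Real.log (3/2)) with hCdef
  have hC0 : 0 < C := by rw [hCdef]; positivity
  refine ⟨2 * C, by positivity, ?_⟩
  intro w p ζ hw hwp hζ
  have hp : 1 ≤ p := hw.trans hwp
  have hpζ : 1 ≤ p * ζ := by nlinarith
  have hpζ0 : 0 < p * ζ := by linarith
  have hε0 : 0 < 2 / (p * ζ) := by positivity
  have hε2 : 2 / (p * ζ) ≤ 2 := by
    rw [div_le_iff₀ hpζ0]; nlinarith
  have key := excision_aux hγ0 hγ1.le hε0 hε2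
  rw [← hCdef] at key
  clear_value C
  have h1ε : 1/(2/(p*ζ)) = p * ζ / 2 := by
    rw [one_div_div]
  have hLle : (Real.log (1 + 1/(2/(p*ζ)))) ^ γ ≤ (Real.log (1 + p*ζ)) ^ γ := by
    apply Real.rpow_le_rpow
    · apply Real.log_nonneg
      have : 0 ≤ 1/(2/(p*ζ)) := by positivity
      linarith
    · apply Real.log_le_log (by rw [h1ε]; linarith)
      rw [h1ε]; linarith
    · exact hγ0.le
  have hLnn : 0 ≤ (Real.log (1 + p*ζ)) ^ γ := Real.rpow_nonneg (by
    apply Real.log_nonneg; linarith) γ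
  have hwζ : (0:ℝ) ≤ w^2 * ζ^2 := by positivity
  set X := (Real.log (1 + p*ζ)) ^ γ with hXdef
  have hXnn : 0 ≤ X := hLnn
  clear_value X
  have step1 : w^2 * ζ^2 * ∫ t in Set.Ioc (0:ℝ) (2/(p*ζ)), (Real.log (1 + 1/t)) ^ γ ≤
      w^2 * ζ^2 * (C * (2/(p*ζ) * X)) := by
    apply mul_le_mul_of_nonneg_left _ hwζ
    calc ∫ t in Set.Ioc (0:ℝ) (2/(p*ζ)), (Real.log (1 + 1/t)) ^ γ
        ≤ C * (2/(p*ζ) * (Real.log (1 + 1/(2/(p*ζ)))) ^ γ) := key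
      _ ≤ C * (2/(p*ζ) * X) := by
          apply mul_le_mul_of_nonneg_left _ hC0.le
          exact mul_le_mul_of_nonneg_left hLle hε0.le
  refine step1.trans ?_
  have hfactor : w^2 * ζ^2 * (C * (2/(p*ζ) * X)) =
      (2 * C * X) * (w^2 * ζ^2 / (p*ζ)) := by
    field_simp
  have hfactor2 : 2 * C * w * ζ * X = (2 * C * X) * (w * ζ) := by ring
  rw [hfactor, hfactor2]
  apply mul_le_mul_of_nonneg_left _ (by positivity)
  rw [div_le_iff₀ hpζ0]
  nlinarith
end
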